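/- Assume additionally that a is not proportional to 𝟙 and that G is non-regular. (i) If ⟨ψ, a⟩ > 0, then there exists δ̄ ∈ [0, 1/λ₁) such that for every δ ∈ (δ̄, 1/λ₁): V(p⁰(δ), δ) > V(p^ur, δ) and Π(p⁰(δ), δ) < Π(p^ur, δ), i.e., banning price discrimination harms the firm but benefits consumers. (ii) If ⟨ψ, a⟩ < 0, then there exists δ̿ ∈ [0, 1/λ₁) such that for every δ ∈ (δ̿, 1/λ₁): V(p⁰(δ), δ) < V(p^ur, δ) and Π(p⁰(δ), δ) < Π(p^ur, δ), i.e., banning price discrimination harms both the firm and consumers. -/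

import Mathlib

/-!
Write `G = Σ lam i • w i w iᵀ` in the orthonormal eigenbasis. Then `H(δ)` has eigenvalues
`(1 - δ * lam i)⁻¹` on the same basis, and the surplus and the uniform price become finite
sums in the coordinates `w i ⬝ᵥ a` and `w i ⬝ᵥ 𝟙`.

Profit: for a symmetric `H`, `Π(p^ur) - Π(p) = (p - p^ur)ᵀ H (p - p^ur)`, which is positive
because `H` is positive definite and `p⁰ ≠ p^ur` (`p⁰` is a multiple of `𝟙`, `p^ur = a / 2` is not).

Surplus: as `δ → 1 / lam 0` only the weight `(1 - δ * lam 0)⁻¹` of the Perron vector `w 0`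
blows up, and the uniform price tends to `(w 0 ⬝ᵥ a) / (2 * (w 0 ⬝ᵥ 𝟙))`, which makes the
`w 0`-coordinate of `a - p⁰` tend to that of `a - p^ur`. The leading term of
`V(p⁰) - V(p^ur)` is therefore only of order `(1 - δ * lam 0)⁻¹`, and its coefficient is
`(w 0 ⬝ᵥ a) * (ψ ⬝ᵥ a) / (4 * (w 0 ⬝ᵥ 𝟙) ^ 2)`: the sign of `ψ ⬝ᵥ a` decides which pricing
regime consumers prefer close to the critical intensity.
-/

open Matrix

noncomputable def Hmat {n : ℕ} (G : Matrix (Fin n) (Fin n) ℝ) (δ : ℝ) :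
    Matrix (Fin n) (Fin n) ℝ :=
  (1 - δ • G)⁻¹

/-- Monopolist profit Π(p) = (p − c)ᵀ H (a − p). -/
noncomputable def profit {n : ℕ} (G : Matrix (Fin n) (Fin n) ℝ) (δ : ℝ)
    (a c p : Fin n → ℝ) : ℝ :=
  (p - c) ⬝ᵥ (Hmat G δ *ᵥ (a - p))

/-- Aggregate consumer surplus V(p) = (1/2)(a − p)ᵀ H² (a − p). -/
noncomputable def surplus {n : ℕ} (G : Matrix (Fin n) (Fin n) ℝ) (δ : ℝ)
    (a p : Fin n → ℝ) : ℝ :=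
  (1 / 2 : ℝ) * ((a - p) ⬝ᵥ ((Hmat G δ * Hmat G δ) *ᵥ (a - p)))

/-- Unrestricted optimal price p^ur = (a + c)/2. -/
noncomputable def pUR {n : ℕ} (a c : Fin n → ℝ) : Fin n → ℝ :=
  (1 / 2 : ℝ) • (a + c)

/-- The Pareto price family 𝕡(η). -/
noncomputable def pFam {n : ℕ} (G : Matrix (Fin n) (Fin n) ℝ) (δ : ℝ)
    (a c : Fin n → ℝ) (η : ℝ) : Fin n → ℝ :=
  pUR a c - (η / (2 - η)) • ((1 - (2 * δ / (2 - η)) • G)⁻¹ *ᵥ ((1 / 2 : ℝ) • (a - c)))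

/-- The all-ones vector 𝟙. -/
def onesVec (n : ℕ) : Fin n → ℝ := fun _ => 1

/-- The sufficient statistic 𝒜(p) = ⟨w₁, p − p^ur⟩ / ⟨w₁, (a−c)/2⟩. -/
noncomputable def AAstat {n : ℕ} (w1 a c p : Fin n → ℝ) : ℝ :=
  (w1 ⬝ᵥ (p - pUR a c)) / (w1 ⬝ᵥ ((1 / 2 : ℝ) • (a - c)))

/-- Profit ratio R_Π(p, δ). -/
noncomputable def Rpi {n : ℕ} (G : Matrix (Fin n) (Fin n) ℝ) (δ : ℝ)
    (a c p : Fin n → ℝ) : ℝ :=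
  profit G δ a c p / profit G δ a c (pUR a c)

/-- Consumer-surplus ratio R_V(p, δ). -/
noncomputable def Rv {n : ℕ} (G : Matrix (Fin n) (Fin n) ℝ) (δ : ℝ)
    (a c p : Fin n → ℝ) : ℝ :=
  surplus G δ a p / surplus G δ a (pUR a c)

/-- The network statistic ψ. -/
noncomputable def psiVec {n : ℕ} [NeZero n] (w : Fin n → Fin n → ℝ)
    (lam : Fin n → ℝ) : Fin n → ℝ :=
  (∑ i ∈ Finset.univ.erase (0 : Fin n),
      (w i ⬝ᵥ onesVec n) ^ 2 / (1 - lam i / lam 0)) • w 0 -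
    ∑ i ∈ Finset.univ.erase (0 : Fin n),
      ((w i ⬝ᵥ onesVec n) * (w 0 ⬝ᵥ onesVec n) / (1 - lam i / lam 0)) • w i

/-- The optimal uniform price p⁰(δ) (with c = 0). -/
noncomputable def p0fn {n : ℕ} (G : Matrix (Fin n) (Fin n) ℝ) (δ : ℝ)
    (a : Fin n → ℝ) : Fin n → ℝ :=
  ((onesVec n ⬝ᵥ (Hmat G δ *ᵥ pUR a 0)) /
      (onesVec n ⬝ᵥ (Hmat G δ *ᵥ onesVec n))) • onesVec n

open Filter Topology Finset

section Spectral

variable {ι : Type*} [Fintype ι] [DecidableEq ι]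

theorem dotProduct_transpose_of_diagonal_mul_of_mulVec (w : ι → ι → ℝ) (d u v : ι → ℝ) :
    u ⬝ᵥ (((of w)ᵀ * diagonal d * of w) *ᵥ v) = ∑ i, d i * ((w i ⬝ᵥ u) * (w i ⬝ᵥ v)) := by
  rw [← mulVec_mulVec, ← mulVec_mulVec, dotProduct_mulVec, vecMul_transpose, dotProduct]
  simp only [mulVec_diagonal]
  exact sum_congr rfl fun i _ => by
    change (w i ⬝ᵥ u) * (d i * (w i ⬝ᵥ v)) = _
    ring

theorem transpose_diagonal_mul_mul_transpose_diagonal_mul {W : Matrix ι ι ℝ} (hW : W * Wᵀ = 1)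
    (d₁ d₂ : ι → ℝ) :
    (Wᵀ * diagonal d₁ * W) * (Wᵀ * diagonal d₂ * W) = Wᵀ * diagonal (d₁ * d₂) * W := by
  calc (Wᵀ * diagonal d₁ * W) * (Wᵀ * diagonal d₂ * W)
      = Wᵀ * diagonal d₁ * (W * Wᵀ) * diagonal d₂ * W := by simp only [Matrix.mul_assoc]
    _ = _ := by rw [hW, Matrix.mul_one, Matrix.mul_assoc Wᵀ, diagonal_mul_diagonal]; rfl

variable {G : Matrix ι ι ℝ} {w : ι → ι → ℝ} {lam : ι → ℝ}

theorem of_mul_transpose_eq_one_of_orthonormal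
    (horth : ∀ i j, w i ⬝ᵥ w j = if i = j then (1 : ℝ) else 0) :
    of w * (of w)ᵀ = 1 := by
  ext i j
  simpa [mul_apply, one_apply, dotProduct] using horth i j

theorem eq_transpose_mul_diagonal_mul_of_eigenbasis
    (horth : ∀ i j, w i ⬝ᵥ w j = if i = j then (1 : ℝ) else 0)
    (heig : ∀ i, G *ᵥ w i = lam i • w i) :
    G = (of w)ᵀ * diagonal lam * of w := by
  have hcol : G * (of w)ᵀ = (of w)ᵀ * diagonal lam := by
    ext k i
    rw [mul_diagonal]
    simpa [mulVec, dotProduct, mul_apply, mul_comm] using congrFun (heig i) k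
  calc G = G * ((of w)ᵀ * of w) := by
        rw [mul_eq_one_comm.mp (of_mul_transpose_eq_one_of_orthonormal horth), Matrix.mul_one]
    _ = _ := by rw [← Matrix.mul_assoc, hcol]

end Spectral

theorem profit_pUR_sub_profit {n : ℕ} {G : Matrix (Fin n) (Fin n) ℝ} {δ : ℝ}
    (hH : (Hmat G δ).IsSymm) (a c p : Fin n → ℝ) :
    profit G δ a c (pUR a c) - profit G δ a c p =
      (p - pUR a c) ⬝ᵥ (Hmat G δ *ᵥ (p - pUR a c)) := by
  set H := Hmat G δ
  set x := p - pUR a c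
  set h := pUR a c - c
  have hsymm : h ⬝ᵥ (H *ᵥ x) = x ⬝ᵥ (H *ᵥ h) := by
    rw [dotProduct_mulVec, ← mulVec_transpose, hH.eq, dotProduct_comm]
  have ha : a - pUR a c = h := by
    simp only [h, pUR]; module
  have hp : p - c = h + x := by simp only [h, x]; abel
  have hap : a - p = h - x := by rw [← ha]; simp only [x]; abel
  rw [profit, profit, ha, hp, hap]
  simp only [mulVec_sub, dotProduct_sub, add_dotProduct]
  linarith

theorem profit_lt_profit_pUR {n : ℕ} {G : Matrix (Fin n) (Fin n) ℝ} {δ : ℝ}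
    (hH : (Hmat G δ).PosDef) {a c p : Fin n → ℝ} (hp : p ≠ pUR a c) :
    profit G δ a c p < profit G δ a c (pUR a c) := by
  have := hH.dotProduct_mulVec_pos (sub_ne_zero.mpr hp)
  rw [star_trivial] at this
  linarith [profit_pUR_sub_profit (isHermitian_iff_isSymm.mp hH.1) a c p]

theorem p0fn_ne_pUR {n : ℕ} (G : Matrix (Fin n) (Fin n) ℝ) (δ : ℝ) {a : Fin n → ℝ}
    (ha : ¬ ∃ t : ℝ, a = t • onesVec n) : p0fn G δ a ≠ pUR a 0 := by
  intro h
  refine ha ⟨2 * ((onesVec n ⬝ᵥ (Hmat G δ *ᵥ pUR a 0)) /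
      (onesVec n ⬝ᵥ (Hmat G δ *ᵥ onesVec n))), funext fun k => ?_⟩
  have := congrFun h k
  simp only [p0fn, pUR, onesVec, Pi.smul_apply, Pi.add_apply, Pi.zero_apply, smul_eq_mul] at this ⊢
  linarith

section UniformPricing

variable {ι : Type*} [Fintype ι] [DecidableEq ι]

/- In an orthonormal eigenbasis of `G`, with `μ` the eigenvalues of `H` and `A`, `B` the
coordinates of `a`, `𝟙`: `uniformLevel` is the optimal uniform price and `surplusGap` is
`2 * (V(p⁰) - V(p^ur))` (see `p0fn_eq` and `surplus_p0fn_sub_surplus_pUR`). -/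
noncomputable def uniformLevel (μ A B : ι → ℝ) : ℝ :=
  (∑ i, μ i * (B i * A i)) / (2 * ∑ i, μ i * B i ^ 2)

noncomputable def surplusGap (μ A B : ι → ℝ) : ℝ :=
  ∑ i, μ i ^ 2 * ((A i - uniformLevel μ A B * B i) ^ 2 - (A i / 2) ^ 2)

theorem uniformLevel_eq_of_mul_eq_one {μ A B : ι → ℝ} {s : ℝ} {i₀ : ι} (hs : s * μ i₀ = 1) :
    uniformLevel μ A B =
      (s * ∑ i ∈ univ.erase i₀, μ i * (B i * A i) + B i₀ * A i₀) /
        (2 * (s * ∑ i ∈ univ.erase i₀, μ i * B i ^ 2 + B i₀ ^ 2)) := by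
  have hs₀ : s ≠ 0 := left_ne_zero_of_mul_eq_one hs
  rw [uniformLevel, ← add_sum_erase _ _ (mem_univ i₀), ← add_sum_erase _ _ (mem_univ i₀),
    ← mul_div_mul_left _ _ hs₀]
  congr 1
  · linear_combination B i₀ * A i₀ * hs
  · linear_combination 2 * B i₀ ^ 2 * hs

/- With `μ i₀ = s⁻¹`, the `i₀`-term of the gap carries the factor `A i₀ / 2 - q * B i₀`, which is
`O(s)`; in this form no term blows up as `s → 0`. -/
theorem mul_surplusGap_eq {μ A B : ι → ℝ} {s : ℝ} {i₀ : ι} (hs : s * μ i₀ = 1)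
    (hD : s * ∑ i ∈ univ.erase i₀, μ i * B i ^ 2 + B i₀ ^ 2 ≠ 0) :
    s * surplusGap μ A B =
      s * ∑ i ∈ univ.erase i₀, μ i ^ 2 * ((A i - uniformLevel μ A B * B i) ^ 2 - (A i / 2) ^ 2) +
        (∑ i ∈ univ.erase i₀, μ i * (B i * (A i₀ * B i - B i₀ * A i))) /
          (2 * (s * ∑ i ∈ univ.erase i₀, μ i * B i ^ 2 + B i₀ ^ 2)) *
          (3 * A i₀ / 2 - uniformLevel μ A B * B i₀) := by
  set q := uniformLevel μ A B with hq_def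
  set X := ∑ i ∈ univ.erase i₀, μ i * (B i * A i)
  set Y := ∑ i ∈ univ.erase i₀, μ i * B i ^ 2
  set E := ∑ i ∈ univ.erase i₀, μ i * (B i * (A i₀ * B i - B i₀ * A i))
  have hE : E = A i₀ * Y - B i₀ * X := by
    simp only [E, X, Y, mul_sum, ← sum_sub_distrib]
    exact sum_congr rfl fun i _ => by ring
  have hq : q * (2 * (s * Y + B i₀ ^ 2)) = s * X + B i₀ * A i₀ := by
    rw [hq_def, uniformLevel_eq_of_mul_eq_one hs]
    exact div_mul_cancel₀ _ (mul_ne_zero two_ne_zero hD)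
  have hlead : s * μ i₀ ^ 2 * (A i₀ / 2 - q * B i₀) = E / (2 * (s * Y + B i₀ ^ 2)) := by
    rw [eq_div_iff (mul_ne_zero two_ne_zero hD)]
    linear_combination -(s * μ i₀ ^ 2 * B i₀) * hq - (s * μ i₀) ^ 2 * hE + (s * μ i₀ + 1) * E * hs
  rw [← hlead, surplusGap, ← add_sum_erase _ _ (mem_univ i₀)]
  ring

theorem tendsto_mul_surplusGap {α : Type*} {l : Filter α} {μ : α → ι → ℝ} {s : α → ℝ}
    {ν A B : ι → ℝ} {i₀ : ι} (hB : B i₀ ≠ 0) (hs : Tendsto s l (𝓝 0))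
    (hsμ : ∀ᶠ x in l, s x * μ x i₀ = 1) (hμ : ∀ i ≠ i₀, Tendsto (fun x => μ x i) l (𝓝 (ν i))) :
    Tendsto (fun x => s x * surplusGap (μ x) A B) l
      (𝓝 (A i₀ * (∑ i ∈ univ.erase i₀, ν i * (B i * (A i₀ * B i - B i₀ * A i))) /
        (2 * B i₀ ^ 2))) := by
  have hsum (c : ι → ℝ) : Tendsto (fun x => ∑ i ∈ univ.erase i₀, μ x i * c i) l
      (𝓝 (∑ i ∈ univ.erase i₀, ν i * c i)) :=
    tendsto_finsetSum _ fun i hi => (hμ i (ne_of_mem_erase hi)).mul_const _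
  have hrest (c : ι → ℝ) : Tendsto (fun x => s x * ∑ i ∈ univ.erase i₀, μ x i * c i) l (𝓝 0) := by
    simpa using hs.mul (hsum c)
  have hden : Tendsto (fun x => s x * ∑ i ∈ univ.erase i₀, μ x i * B i ^ 2 + B i₀ ^ 2) l
      (𝓝 (B i₀ ^ 2)) := by
    simpa using (hrest fun i => B i ^ 2).add_const (B i₀ ^ 2)
  have hB2 : B i₀ ^ 2 ≠ 0 := pow_ne_zero 2 hB
  have hq : Tendsto (fun x => uniformLevel (μ x) A B) l (𝓝 (A i₀ / (2 * B i₀))) := by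
    have := ((hrest fun i => B i * A i).add_const (B i₀ * A i₀)).div (hden.const_mul 2)
      (mul_ne_zero two_ne_zero hB2)
    rw [zero_add, show B i₀ * A i₀ / (2 * B i₀ ^ 2) = A i₀ / (2 * B i₀) by field_simp] at this
    exact this.congr' (hsμ.mono fun x hx => (uniformLevel_eq_of_mul_eq_one hx).symm)
  have hrhs := (hs.mul (tendsto_finsetSum (univ.erase i₀) fun i hi =>
      ((hμ i (ne_of_mem_erase hi)).pow 2).mul
        ((((tendsto_const_nhds (x := A i)).sub (hq.mul_const (B i))).pow 2).sub
          (tendsto_const_nhds (x := (A i / 2) ^ 2))))).add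
    (((hsum fun i => B i * (A i₀ * B i - B i₀ * A i)).div (hden.const_mul 2)
      (mul_ne_zero two_ne_zero hB2)).mul
      ((tendsto_const_nhds (x := 3 * A i₀ / 2)).sub (hq.mul_const (B i₀))))
  refine (hrhs.congr' ?_).trans_eq ?_
  · filter_upwards [hsμ, hden.eventually_ne hB2] with x hx hD
    exact (mul_surplusGap_eq hx hD).symm
  · rw [zero_mul, zero_add]
    generalize ∑ i ∈ univ.erase i₀, ν i * (B i * (A i₀ * B i - B i₀ * A i)) = κ
    congr 1
    field_simp
    ring

end UniformPricing

theorem psiVec_dotProduct {n : ℕ} [NeZero n] (w : Fin n → Fin n → ℝ) (lam : Fin n → ℝ)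
    (a : Fin n → ℝ) :
    psiVec w lam ⬝ᵥ a = ∑ i ∈ univ.erase 0, (1 - lam i / lam 0)⁻¹ *
      ((w i ⬝ᵥ onesVec n) *
        ((w 0 ⬝ᵥ a) * (w i ⬝ᵥ onesVec n) - (w 0 ⬝ᵥ onesVec n) * (w i ⬝ᵥ a))) := by
  simp only [psiVec, sub_dotProduct, smul_dotProduct, sum_dotProduct, smul_eq_mul, sum_mul,
    ← sum_sub_distrib]
  exact sum_congr rfl fun i _ => by ring

section Network

variable {n : ℕ} {G : Matrix (Fin n) (Fin n) ℝ} {w : Fin n → Fin n → ℝ} {lam : Fin n → ℝ}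
  (horth : ∀ i j, w i ⬝ᵥ w j = if i = j then (1 : ℝ) else 0) (heig : ∀ i, G *ᵥ w i = lam i • w i)
include horth heig

theorem Hmat_eq {δ : ℝ} (hδ : ∀ i, 1 - δ * lam i ≠ 0) :
    Hmat G δ = (of w)ᵀ * diagonal (fun i => (1 - δ * lam i)⁻¹) * of w := by
  have hW := of_mul_transpose_eq_one_of_orthonormal horth
  have hres : 1 - δ • G = (of w)ᵀ * diagonal (fun i => 1 - δ * lam i) * of w := by
    have : diagonal (fun i => 1 - δ * lam i) = 1 - δ • diagonal lam := by
      ext i j; by_cases h : i = j <;> simp [diagonal, one_apply, h]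
    rw [this, Matrix.mul_sub, Matrix.sub_mul, Matrix.mul_one, mul_eq_one_comm.mp hW,
      eq_transpose_mul_diagonal_mul_of_eigenbasis horth heig]
    simp
  apply inv_eq_right_inv
  rw [hres, transpose_diagonal_mul_mul_transpose_diagonal_mul hW,
    show ((fun i => 1 - δ * lam i) * fun i => (1 - δ * lam i)⁻¹) = 1 from
      funext fun i => mul_inv_cancel₀ (hδ i),
    diagonal_one', Matrix.mul_one, mul_eq_one_comm.mp hW]

theorem dotProduct_Hmat_mulVec {δ : ℝ} (hδ : ∀ i, 1 - δ * lam i ≠ 0) (u v : Fin n → ℝ) :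
    u ⬝ᵥ (Hmat G δ *ᵥ v) = ∑ i, (1 - δ * lam i)⁻¹ * ((w i ⬝ᵥ u) * (w i ⬝ᵥ v)) := by
  rw [Hmat_eq horth heig hδ, dotProduct_transpose_of_diagonal_mul_of_mulVec]

theorem surplus_eq_sum {δ : ℝ} (hδ : ∀ i, 1 - δ * lam i ≠ 0) (a p : Fin n → ℝ) :
    surplus G δ a p = (∑ i, (1 - δ * lam i)⁻¹ ^ 2 * (w i ⬝ᵥ (a - p)) ^ 2) / 2 := by
  rw [surplus, Hmat_eq horth heig hδ, transpose_diagonal_mul_mul_transpose_diagonal_mul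
    (of_mul_transpose_eq_one_of_orthonormal horth), dotProduct_transpose_of_diagonal_mul_of_mulVec]
  simp only [Pi.mul_apply, sq]
  ring

theorem p0fn_eq {δ : ℝ} (hδ : ∀ i, 1 - δ * lam i ≠ 0) (a : Fin n → ℝ) :
    p0fn G δ a = uniformLevel (fun i => (1 - δ * lam i)⁻¹) (fun i => w i ⬝ᵥ a)
      (fun i => w i ⬝ᵥ onesVec n) • onesVec n := by
  rw [p0fn, dotProduct_Hmat_mulVec horth heig hδ, dotProduct_Hmat_mulVec horth heig hδ,
    uniformLevel]
  congr 1
  simp only [pUR, add_zero, dotProduct_smul, smul_eq_mul, sq]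
  rw [mul_comm 2, ← div_div, div_right_comm]
  congr 1
  rw [sum_div]
  exact sum_congr rfl fun i _ => by ring

theorem surplus_p0fn_sub_surplus_pUR {δ : ℝ} (hδ : ∀ i, 1 - δ * lam i ≠ 0) (a : Fin n → ℝ) :
    surplus G δ a (p0fn G δ a) - surplus G δ a (pUR a 0) =
      surplusGap (fun i => (1 - δ * lam i)⁻¹) (fun i => w i ⬝ᵥ a)
        (fun i => w i ⬝ᵥ onesVec n) / 2 := by
  rw [surplus_eq_sum horth heig hδ, surplus_eq_sum horth heig hδ, p0fn_eq horth heig hδ,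
    surplusGap, ← sub_div, ← sum_sub_distrib]
  congr 1
  refine sum_congr rfl fun i _ => ?_
  simp only [pUR, add_zero, dotProduct_sub, dotProduct_smul, smul_eq_mul]
  ring

theorem tendsto_mul_surplus_p0fn_sub_surplus_pUR [NeZero n] (hgap : ∀ i, i ≠ 0 → lam i < lam 0)
    (hlam0 : 0 < lam 0) (a : Fin n → ℝ) (hB : w 0 ⬝ᵥ onesVec n ≠ 0) :
    Tendsto (fun δ => (1 - δ * lam 0) * (surplus G δ a (p0fn G δ a) - surplus G δ a (pUR a 0)))
      (𝓝[<] (1 / lam 0))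
      (𝓝 ((w 0 ⬝ᵥ a) * (psiVec w lam ⬝ᵥ a) / (4 * (w 0 ⬝ᵥ onesVec n) ^ 2))) := by
  have hT : 0 < 1 / lam 0 := by positivity
  have hcont (i : Fin n) : Tendsto (fun δ => 1 - δ * lam i) (𝓝[<] (1 / lam 0))
      (𝓝 (1 - lam i / lam 0)) := by
    refine ((continuous_const.sub (continuous_id.mul continuous_const)).tendsto' _ _ ?_).mono_left
      nhdsWithin_le_nhds
    simp [inv_mul_eq_div]
  have hpos : ∀ᶠ δ in 𝓝[<] (1 / lam 0), ∀ i, 0 < 1 - δ * lam i := by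
    filter_upwards [Ioo_mem_nhdsLT hT] with δ hδ i
    have hle : lam i ≤ lam 0 := by
      rcases eq_or_ne i 0 with rfl | hi
      exacts [le_rfl, (hgap i hi).le]
    have := (lt_div_iff₀ hlam0).mp hδ.2
    nlinarith [mul_le_mul_of_nonneg_left hle hδ.1.le]
  have hlim := tendsto_mul_surplusGap (i₀ := 0) (μ := fun δ i => (1 - δ * lam i)⁻¹)
    (ν := fun i => (1 - lam i / lam 0)⁻¹) (A := fun i => w i ⬝ᵥ a)
    (B := fun i => w i ⬝ᵥ onesVec n) hB
    (by simpa [div_self hlam0.ne'] using hcont 0)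
    (hpos.mono fun δ hδ => mul_inv_cancel₀ (hδ 0).ne')
    (fun i hi => (hcont i).inv₀ (by have := (div_lt_one hlam0).mpr (hgap i hi); linarith))
  refine ((hlim.div_const 2).congr' ?_).trans_eq ?_
  · filter_upwards [hpos] with δ hδ
    rw [surplus_p0fn_sub_surplus_pUR horth heig fun i => (hδ i).ne', mul_div_assoc]
  · rw [psiVec_dotProduct]
    congr 1
    generalize ∑ i ∈ univ.erase 0, (1 - lam i / lam 0)⁻¹ * ((w i ⬝ᵥ onesVec n) *
      ((w 0 ⬝ᵥ a) * (w i ⬝ᵥ onesVec n) - (w 0 ⬝ᵥ onesVec n) * (w i ⬝ᵥ a))) = κ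
    ring

end Network

theorem stmt14_general {n : ℕ} [NeZero n]
    (G : Matrix (Fin n) (Fin n) ℝ)
    (w : Fin n → Fin n → ℝ) (lam : Fin n → ℝ)
    (horth : ∀ i j, w i ⬝ᵥ w j = if i = j then (1 : ℝ) else 0)
    (heig : ∀ i, G *ᵥ w i = lam i • w i)
    (hgap : ∀ i, i ≠ 0 → lam i < lam 0)
    (hlam0 : 0 < lam 0)
    (hw0 : ∀ k, 0 < w 0 k)
    (hpd : ∀ δ ∈ Set.Ico (0 : ℝ) (1 / lam 0), (Hmat G δ).PosDef)
    (a : Fin n → ℝ) (ha : ∀ i, 0 < a i)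
    (haprop : ¬ ∃ t : ℝ, a = t • onesVec n) :
    (psiVec w lam ⬝ᵥ a > 0 →
      ∃ δbar ∈ Set.Ico (0 : ℝ) (1 / lam 0),
        ∀ δ ∈ Set.Ioo δbar (1 / lam 0),
          surplus G δ a (pUR a 0) < surplus G δ a (p0fn G δ a) ∧
          profit G δ a 0 (p0fn G δ a) < profit G δ a 0 (pUR a 0)) ∧
    (psiVec w lam ⬝ᵥ a < 0 →
      ∃ δbbar ∈ Set.Ico (0 : ℝ) (1 / lam 0),
        ∀ δ ∈ Set.Ioo δbbar (1 / lam 0),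
          surplus G δ a (p0fn G δ a) < surplus G δ a (pUR a 0) ∧
          profit G δ a 0 (p0fn G δ a) < profit G δ a 0 (pUR a 0)) := by
  have hT : 0 < 1 / lam 0 := by positivity
  have hA : 0 < w 0 ⬝ᵥ a := sum_pos (fun k _ => mul_pos (hw0 k) (ha k)) univ_nonempty
  have hB : 0 < w 0 ⬝ᵥ onesVec n := sum_pos (fun k _ => by simp [onesVec, hw0 k]) univ_nonempty
  have hlim := tendsto_mul_surplus_p0fn_sub_surplus_pUR horth heig hgap hlam0 a hB.ne'
  have hprofit {δ : ℝ} (hδ : δ ∈ Set.Ioo 0 (1 / lam 0)) :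
      profit G δ a 0 (p0fn G δ a) < profit G δ a 0 (pUR a 0) :=
    profit_lt_profit_pUR (hpd δ (Set.Ioo_subset_Ico_self hδ)) (p0fn_ne_pUR G δ haprop)
  have hnear : ∀ᶠ δ in 𝓝[<] (1 / lam 0), δ ∈ Set.Ioo 0 (1 / lam 0) ∧ 0 ≤ 1 - δ * lam 0 := by
    filter_upwards [Ioo_mem_nhdsLT hT] with δ hδ
    exact ⟨hδ, sub_nonneg.mpr ((lt_div_iff₀ hlam0).mp hδ.2).le⟩
  refine ⟨fun hψ => ?_, fun hψ => ?_⟩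
  · obtain ⟨δbar, hδbar, hsub⟩ := (mem_nhdsLT_iff_exists_mem_Ico_Ioo_subset hT).mp
      ((hlim.eventually (eventually_gt_nhds (div_pos (mul_pos hA hψ) (by positivity)))).and hnear)
    refine ⟨δbar, hδbar, fun δ hδ => ?_⟩
    obtain ⟨hV, hδ', hs₀⟩ := hsub hδ
    exact ⟨sub_pos.mp (pos_of_mul_pos_right hV hs₀), hprofit hδ'⟩
  · obtain ⟨δbar, hδbar, hsub⟩ := (mem_nhdsLT_iff_exists_mem_Ico_Ioo_subset hT).mp
      ((hlim.eventually (eventually_lt_nhds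
        (div_neg_of_neg_of_pos (mul_neg_of_pos_of_neg hA hψ) (by positivity)))).and hnear)
    refine ⟨δbar, hδbar, fun δ hδ => ?_⟩
    obtain ⟨hV, hδ', hs₀⟩ := hsub hδ
    exact ⟨sub_neg.mp (neg_of_mul_neg_right hV hs₀), hprofit hδ'⟩

theorem stmt14 {n : ℕ} [NeZero n]
    (G : Matrix (Fin n) (Fin n) ℝ) (hGsym : G.IsSymm)
    (hGnn : ∀ i j, 0 ≤ G i j) (hGdiag : ∀ i, G i i = 0)
    (w : Fin n → Fin n → ℝ) (lam : Fin n → ℝ)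
    (horth : ∀ i j, w i ⬝ᵥ w j = if i = j then (1 : ℝ) else 0)
    (heig : ∀ i, G *ᵥ w i = lam i • w i)
    (hgap : ∀ i, i ≠ 0 → lam i < lam 0)
    (hlam0 : 0 < lam 0)
    (hw0 : ∀ k, 0 < w 0 k)
    (hpd : ∀ δ ∈ Set.Ico (0 : ℝ) (1 / lam 0), (Hmat G δ).PosDef)
    (a : Fin n → ℝ) (ha : ∀ i, 0 < a i)
    (haprop : ¬ ∃ t : ℝ, a = t • onesVec n)
    (hnonreg : ∃ i : Fin n, i ≠ 0 ∧ w i ⬝ᵥ onesVec n ≠ 0) :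
    (psiVec w lam ⬝ᵥ a > 0 →
      ∃ δbar ∈ Set.Ico (0 : ℝ) (1 / lam 0),
        ∀ δ ∈ Set.Ioo δbar (1 / lam 0),
          surplus G δ a (pUR a 0) < surplus G δ a (p0fn G δ a) ∧
          profit G δ a 0 (p0fn G δ a) < profit G δ a 0 (pUR a 0)) ∧
    (psiVec w lam ⬝ᵥ a < 0 →
      ∃ δbbar ∈ Set.Ico (0 : ℝ) (1 / lam 0),
        ∀ δ ∈ Set.Ioo δbbar (1 / lam 0),
          surplus G δ a (p0fn G δ a) < surplus G δ a (pUR a 0) ∧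
          profit G δ a 0 (p0fn G δ a) < profit G δ a 0 (pUR a 0)) :=
  stmt14_general G w lam horth heig hgap hlam0 hw0 hpd a ha haprop
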